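/- Consider the single-virus ODE ż_i = -δ_i z_i + (1 - z_i) Σ_j β_{ij} z_j with δ_i ≥ 0 and B = (β_{ij}) nonnegative and irreducible. If z(0) ∈ [0,1]^n is nonzero, then there exists τ ≥ 0 such that z_i(τ) > 0 for all i ∈ [n]. -/

import Mathlib

/-!
The ODE is quasi-positive: when `z i` reaches `-β` while all other coordinates are `≥ -β`, the
derivative of `z i` is at least `-K β`, so no coordinate can cross a barrier `-ε e^{(K+1)t}` and,
letting `ε → 0`, the orbit stays in the nonnegative orthant. There `ż i ≥ -c z i` on compact time
intervals, so by Grönwall a positive coordinate stays positive. If `z i 1 = 0`, then `z i`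
vanishes on `(0, 1)`, hence so does its derivative `∑ j, B i j * z j`, and every `z j` with
`B i j > 0` vanishes there too; by irreducibility this reaches a coordinate that is positive at
time `0`, a contradiction. Hence `τ = 1` works.
-/

/-- Irreducibility of a square matrix: the directed graph with an edge from `j` to `i`
whenever `M i j > 0` is strongly connected. -/
def Irred {n : ℕ} (M : Matrix (Fin n) (Fin n) ℝ) : Prop :=
  ∀ i j : Fin n, ∃ (m : ℕ) (c : ℕ → Fin n), c 0 = j ∧ c m = i ∧
    ∀ k < m, 0 < M (c (k + 1)) (c k)

/-- Spectral abscissa: largest real part of a (complex) eigenvalue. -/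
noncomputable def spA {n : ℕ} (M : Matrix (Fin n) (Fin n) ℝ) : ℝ :=
  sSup ((fun z : ℂ => z.re) '' spectrum ℂ (M.map (fun x : ℝ => (x : ℂ))))

/-- Spectral radius: largest modulus of a (complex) eigenvalue. -/
noncomputable def spR {n : ℕ} (M : Matrix (Fin n) (Fin n) ℝ) : ℝ :=
  sSup ((fun z : ℂ => ‖z‖) '' spectrum ℂ (M.map (fun x : ℝ => (x : ℂ))))

open Set Filter Topology Real

theorem HasDerivAt.eventually_nhdsGT_lt {f : ℝ → ℝ} {f' x : ℝ} (hf : HasDerivAt f f' x)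
    (hf' : 0 < f') : ∀ᶠ y in 𝓝[>] x, f x < f y := by
  filter_upwards [(hasDerivAt_iff_tendsto_slope_left_right.1 hf).2 (Ioi_mem_nhds hf'),
    self_mem_nhdsWithin] with y hslope hy
  exact (slope_pos_iff hy).1 hslope

theorem Irred.forall_of_forall_pos_imp {n : ℕ} {M : Matrix (Fin n) (Fin n) ℝ} (hM : Irred M)
    {P : Fin n → Prop} (hP : ∀ i j, 0 < M i j → P i → P j) {i : Fin n} (hi : P i) (j : Fin n) :
    P j := by
  obtain ⟨m, c, rfl, rfl, hc⟩ := hM i j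
  exact Nat.decreasingInduction (motive := fun k _ => P (c k))
    (fun k hk ih => hP _ _ (hc k hk) ih) hi m.zero_le

theorem nonneg_of_deriv_ge_neg_mul_on_boundary {ι : Type*} [Finite ι] {f f' : ℝ → ι → ℝ} {a b K : ℝ}
    (hf : ∀ t i, HasDerivAt (fun s => f s i) (f' t i) t) (ha : ∀ i, 0 ≤ f a i)
    (hK : ∀ t ∈ Ico a b, ∀ β > 0, (∀ j, -β ≤ f t j) → ∀ i, f t i = -β → -(K * β) ≤ f' t i) :
    ∀ t ∈ Icc a b, ∀ i, 0 ≤ f t i := by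
  set g : ℝ → ℝ := fun t => exp ((K + 1) * (t - a))
  have hg : ∀ t, HasDerivAt g (g t * (K + 1)) t := fun t => by
    simpa using (((hasDerivAt_id t).sub_const a).const_mul (K + 1)).exp
  have hgc : Continuous g := continuous_iff_continuousAt.2 fun t => (hg t).continuousAt
  have barrier : ∀ ε > 0, Icc a b ⊆ {t | ∀ i, -(ε * g t) ≤ f t i} := by
    intro ε hε
    refine IsClosed.Icc_subset_of_forall_mem_nhdsWithin ?_ ?_ ?_
    · rw [ofPred_forall]
      refine (isClosed_iInter fun i => isClosed_le ?_ ?_).inter isClosed_Icc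
      · exact (continuous_const.mul hgc).neg
      · exact continuous_iff_continuousAt.2 fun t => (hf t i).continuousAt
    · intro i
      simpa [g] using (neg_nonpos.2 hε.le).trans (ha i)
    · rintro x ⟨hx, hxab⟩
      refine eventually_all.2 fun i => ?_
      rcases (hx i).lt_or_eq with hlt | heq
      · refine nhdsWithin_le_nhds (Eventually.mono ?_ fun y hy => le_of_lt hy)
        exact ((hg x).continuousAt.const_mul ε).neg.eventually_lt (hf x i).continuousAt hlt
      · -- `f · i + ε g` vanishes at `x`, and by `hK` its derivative there is `≥ ε g x > 0`
        have hpos : 0 < f' x i + ε * (g x * (K + 1)) := by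
          have := hK x hxab (ε * g x) (by positivity) hx i heq.symm
          nlinarith [exp_pos ((K + 1) * (x - a))]
        filter_upwards [((hf x i).add ((hg x).const_mul ε)).eventually_nhdsGT_lt hpos] with y hy
        simp only [Pi.add_apply] at hy
        linarith
  intro t ht i
  by_contra! hneg
  have hgt : 0 < g t := exp_pos _
  have := barrier (-f t i / (2 * g t)) (div_pos (neg_pos.2 hneg) (by positivity)) ht i
  rw [div_mul_eq_mul_div, mul_div_mul_right _ _ hgt.ne'] at this
  linarith

def IsSISSolution {n : ℕ} (δ : Fin n → ℝ) (B : Matrix (Fin n) (Fin n) ℝ) (z : ℝ → Fin n → ℝ) :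
    Prop :=
  ∀ t i, HasDerivAt (fun s => z s i) (-δ i * z t i + (1 - z t i) * ∑ j, B i j * z t j) t

namespace IsSISSolution

variable {n : ℕ} {δ : Fin n → ℝ} {B : Matrix (Fin n) (Fin n) ℝ} {z : ℝ → Fin n → ℝ}

theorem continuous (hz : IsSISSolution δ B z) : Continuous z :=
  continuous_pi fun i => continuous_iff_continuousAt.2 fun t => (hz t i).continuousAt

theorem nonneg (hz : IsSISSolution δ B z) (hδ : ∀ i, 0 ≤ δ i) (hB : ∀ i j, 0 ≤ B i j)
    (h0 : ∀ i, 0 ≤ z 0 i) : ∀ t ≥ 0, ∀ i, 0 ≤ z t i := by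
  intro T hT
  obtain ⟨M, hM⟩ := (isCompact_Icc (a := 0) (b := T)).exists_bound_of_continuousOn
    hz.continuous.continuousOn
  set S := ∑ i, ∑ j, B i j
  refine nonneg_of_deriv_ge_neg_mul_on_boundary (K := (1 + M) * S) hz h0 ?_ T ⟨hT, le_rfl⟩
  intro t ht β hβ hge i hi
  have hβM : β ≤ M := by
    have := (norm_le_pi_norm (z t) i).trans (hM t (Ico_subset_Icc_self ht))
    rw [hi, Real.norm_eq_abs, abs_neg, abs_of_pos hβ] at this
    exact this
  have hrow : ∑ j, B i j ≤ S :=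
    Finset.single_le_sum (f := fun i => ∑ j, B i j)
      (fun i _ => Finset.sum_nonneg fun j _ => hB i j) (Finset.mem_univ i)
  have hS : 0 ≤ S := (Finset.sum_nonneg fun j _ => hB i j).trans hrow
  have hsum : -(β * S) ≤ ∑ j, B i j * z t j := calc
    -(β * S) ≤ -(β * ∑ j, B i j) := by gcongr
    _ = ∑ j, B i j * -β := by rw [← Finset.sum_mul]; ring
    _ ≤ ∑ j, B i j * z t j := Finset.sum_le_sum fun j _ => by gcongr; exacts [hB i j, hge j]
  rw [hi]
  calc -((1 + M) * S * β) ≤ (1 + β) * -(β * S) := by nlinarith [mul_nonneg hβ.le hS]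
    _ ≤ (1 + β) * ∑ j, B i j * z t j := mul_le_mul_of_nonneg_left hsum (by linarith)
    _ ≤ -δ i * -β + (1 - -β) * ∑ j, B i j * z t j := by nlinarith [mul_nonneg (hδ i) hβ.le]

theorem pos_of_pos (hz : IsSISSolution δ B z) (hB : ∀ i j, 0 ≤ B i j) {t₀ t₁ : ℝ}
    (hnonneg : ∀ t ∈ Icc t₀ t₁, ∀ j, 0 ≤ z t j) (ht : t₀ ≤ t₁) {i : Fin n} (hpos : 0 < z t₀ i) :
    0 < z t₁ i := by
  obtain ⟨C, hC⟩ := (isCompact_Icc (a := t₀) (b := t₁)).bddAbove_image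
    (f := fun t => ∑ j, B i j * z t j) (continuous_finsetSum _ fun j _ =>
      continuous_const.mul ((continuous_apply j).comp hz.continuous)).continuousOn
  -- Grönwall applied to `-z i`, whose derivative is at most `(δ i + C) * z i`
  have h := le_gronwallBound_of_liminf_deriv_right_le (f := fun t => -z t i)
    (K := -(δ i + C)) (ε := 0) (a := t₀) (b := t₁)
    ((continuous_apply i).comp hz.continuous).neg.continuousOn
    (fun x _ r hr => by
      simpa only [slope, vsub_eq_sub, smul_eq_mul, Pi.neg_apply] using
        (hz x i).neg.hasDerivWithinAt.liminf_right_slope_le hr)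
    le_rfl
    (fun x hx => by
      have hx' : x ∈ Icc t₀ t₁ := Ico_subset_Icc_self hx
      have hsum : 0 ≤ ∑ j, B i j * z x j :=
        Finset.sum_nonneg fun j _ => mul_nonneg (hB i j) (hnonneg x hx' j)
      have hCx : ∑ j, B i j * z x j ≤ C := hC ⟨x, hx', rfl⟩
      nlinarith [mul_le_mul_of_nonneg_left hCx (hnonneg x hx' i)])
    t₁ ⟨ht, le_rfl⟩
  rw [gronwallBound_ε0] at h
  nlinarith [exp_pos (-(δ i + C) * (t₁ - t₀))]

theorem eq_zero_of_eventually_eq_zero (hz : IsSISSolution δ B z) (hB : ∀ i j, 0 ≤ B i j)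
    {t : ℝ} (hnonneg : ∀ j, 0 ≤ z t j) {i j : Fin n} (hzero : ∀ᶠ s in 𝓝 t, z s i = 0)
    (hij : 0 < B i j) : z t j = 0 := by
  have hderiv := (hz t i).unique ((hasDerivAt_const t 0).congr_of_eventuallyEq hzero)
  simp only [hzero.self_of_nhds, mul_zero, zero_add, sub_zero, one_mul] at hderiv
  rw [Finset.sum_eq_zero_iff_of_nonneg fun k _ => mul_nonneg (hB i k) (hnonneg k)] at hderiv
  exact (mul_eq_zero.1 (hderiv j (Finset.mem_univ j))).resolve_left hij.ne'

end IsSISSolution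

theorem stmt7 {n : ℕ} (δ : Fin n → ℝ) (B : Matrix (Fin n) (Fin n) ℝ)
    (hδ : ∀ i, 0 ≤ δ i) (hB : ∀ i j, 0 ≤ B i j) (hirr : Irred B)
    (z : ℝ → Fin n → ℝ)
    (hode : ∀ t i, HasDerivAt (fun s => z s i)
      (-δ i * z t i + (1 - z t i) * ∑ j, B i j * z t j) t)
    (hinit : ∀ i, z 0 i ∈ Set.Icc (0 : ℝ) 1) (hz0 : z 0 ≠ 0) :
    ∃ τ ≥ (0 : ℝ), ∀ i, 0 < z τ i := by
  have hz : IsSISSolution δ B z := hode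
  have hnonneg := hz.nonneg hδ hB fun i => (hinit i).1
  have persist : ∀ {t₀ t₁}, 0 ≤ t₀ → t₀ ≤ t₁ → ∀ {k}, 0 < z t₀ k → 0 < z t₁ k :=
    fun ht₀ ht => hz.pos_of_pos hB (fun t ht' => hnonneg t (ht₀.trans ht'.1)) ht
  refine ⟨1, zero_le_one, fun i => ?_⟩
  by_contra hi
  have hvanish : ∀ t ∈ Ioo (0 : ℝ) 1, z t i = 0 := fun t ht =>
    (hnonneg t ht.1.le i).eq_of_not_lt' fun hpos => hi (persist ht.1.le ht.2.le hpos)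
  have hall := hirr.forall_of_forall_pos_imp (P := fun k => ∀ t ∈ Ioo (0 : ℝ) 1, z t k = 0)
    (fun a b hab ha t ht => hz.eq_zero_of_eventually_eq_zero hB (hnonneg t ht.1.le)
      (eventually_of_mem (isOpen_Ioo.mem_nhds ht) ha) hab) hvanish
  obtain ⟨j, hj⟩ := Function.ne_iff.1 hz0
  exact (persist le_rfl (by norm_num) ((hinit j).1.lt_of_ne' hj)).ne' (hall j (1 / 2) (by norm_num))
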